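/- arXiv:math/0608606 — 2 statements merged into one kernel-verified Lean document; each statement's English description precedes it below -/
import Mathlib

section
/- Define B_d(a_1,...,a_r) = ∑_{i_1,...,i_r ≥ 1} (-1)^(d - i_1 - ... - i_r) * binomial(d, i_1+...+i_r) * i_1^(a_1) * ... * i_r^(a_r) (a finite sum since the binomial coefficient vanishes for i_1+...+i_r > d). Then the generating function identity ∑_{d≥0} B_d(a_1,...,a_r) u^d = (1/(1+u)) * P_{a_1+1}(u) * ... * P_{a_r+1}(u) holds in ℤ[[u]], where P_n(u) = ∑_{m=1}^n (m-1)! S(n,m) u^m. -/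
open PowerSeries

open Nat

/-- Stirling numbers of the second kind: number of partitions of an `n`-set into `m`
non-empty blocks, given by the standard recurrence. -/
def stirling : ℕ → ℕ → ℕ
  | 0, 0 => 1
  | 0, _ + 1 => 0
  | _ + 1, 0 => 0
  | n + 1, m + 1 => (m + 1) * stirling n (m + 1) + stirling n m


lemma stirling_zero_right : ∀ n, n ≠ 0 → stirling n 0 = 0
  | 0, h => absurd rfl h
  | n + 1, _ => rfl

lemma stirling_eq_zero_of_lt : ∀ {n m}, n < m → stirling n m = 0
  | 0, m + 1, _ => rfl
  | n + 1, m + 1, h => by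
      have h1 : n < m + 1 := by omega
      have h2 : n < m := by omega
      simp [stirling, stirling_eq_zero_of_lt h1, stirling_eq_zero_of_lt h2]

/-- Vandermonde-type convolution over the top index. -/
lemma choose_conv : ∀ (n p q : ℕ),
    ∑ k ∈ Finset.range (n + 1), (k.choose p) * ((n - k).choose q) = (n + 1).choose (p + q + 1)
  | 0, p, q => by
      cases p <;> cases q <;> simp [Nat.choose]
  | n + 1, p, 0 => by
      simp only [Nat.choose_zero_right, mul_one]
      by_cases hp : p ≤ n + 1
      · rw [← Nat.sum_Icc_choose]
        symm
        apply Finset.sum_subset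
        · intro x hx
          simp only [Finset.mem_Icc, Finset.mem_range] at *
          omega
        · intro x hx hx'
          simp only [Finset.mem_Icc, Finset.mem_range] at *
          exact Nat.choose_eq_zero_of_lt (by omega)
      · rw [Nat.choose_eq_zero_of_lt (by omega)]
        apply Finset.sum_eq_zero
        intro x hx
        simp only [Finset.mem_range] at hx
        exact Nat.choose_eq_zero_of_lt (by omega)
  | n + 1, p, q + 1 => by
      rw [Finset.sum_range_succ]
      have : ∀ k ∈ Finset.range (n + 1), k.choose p * ((n + 1 - k).choose (q + 1))
          = k.choose p * ((n - k).choose q) + k.choose p * ((n - k).choose (q + 1)) := by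
        intro k hk
        simp only [Finset.mem_range] at hk
        have : n + 1 - k = (n - k) + 1 := by omega
        rw [this, Nat.choose_succ_succ, Nat.mul_add]
      rw [Finset.sum_congr rfl this, Finset.sum_add_distrib, choose_conv n p q,
        choose_conv n p (q + 1)]
      simp only [Nat.sub_self, Nat.choose_eq_zero_of_lt (Nat.succ_pos q), Nat.mul_zero]
      rw [Nat.add_zero]
      have : p + (q + 1) + 1 = (p + q + 1) + 1 := by omega
      rw [this, Nat.choose_succ_succ (n + 1) (p + q + 1)]

def hsum (m a : ℕ) : ℤ :=
  ∑ i ∈ Finset.range (m + 1), (-1 : ℤ) ^ (m - i) * (m.choose i) * (i : ℤ) ^ a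

def gsum (m a : ℕ) : ℤ :=
  ∑ i ∈ Finset.Icc 1 m, (-1 : ℤ) ^ (m - i) * ((m - 1).choose (i - 1)) * (i : ℤ) ^ a

lemma neg_one_pow_sub {m i : ℕ} (h : i ≤ m) : (-1 : ℤ) ^ (m - i) = (-1) ^ m * (-1) ^ i := by
  obtain ⟨k, rfl⟩ := Nat.exists_eq_add_of_le h
  have h2 : i + k - i = k := by omega
  rw [h2]
  have key : (-1 : ℤ) ^ (i + k) * (-1) ^ i = (-1) ^ (i + i) * (-1) ^ k := by
    rw [pow_add, pow_add]; ring
  have e1 : ((-1 : ℤ) ^ (i + i) : ℤ) = 1 := Even.neg_one_pow ⟨i, rfl⟩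
  calc (-1 : ℤ) ^ k = (-1) ^ (i + i) * (-1) ^ k := by rw [e1, one_mul]
    _ = (-1) ^ (i + k) * (-1) ^ i := key.symm

lemma range_succ_sum {M : Type*} [AddCommMonoid M] (m : ℕ) (f : ℕ → M) :
    ∑ i ∈ Finset.range (m + 1), f i = f 0 + ∑ i ∈ Finset.Icc 1 m, f i := by
  rw [Finset.sum_range_succ']
  have : ∑ i ∈ Finset.Icc 1 m, f i = ∑ k ∈ Finset.range m, f (k + 1) := by
    rw [← Finset.Ico_add_one_right_eq_Icc, Finset.sum_Ico_eq_sum_range]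
    simp [Nat.add_comm 1]
  rw [this, add_comm]

lemma hsum_zero_eq (m : ℕ) : hsum m 0 = if m = 0 then 1 else 0 := by
  unfold hsum
  have : ∀ i ∈ Finset.range (m + 1), (-1 : ℤ) ^ (m - i) * (m.choose i) * (i : ℤ) ^ 0
      = (-1) ^ m * ((-1) ^ i * (m.choose i)) := by
    intro i hi
    simp only [Finset.mem_range] at hi
    rw [neg_one_pow_sub (by omega : i ≤ m)]
    ring
  rw [Finset.sum_congr rfl this, ← Finset.mul_sum, Int.alternating_sum_range_choose]
  rcases m with _ | m <;> simp

lemma hsum_step (m a : ℕ) : hsum (m + 1) (a + 1) = (m + 1) * gsum (m + 1) a := by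
  unfold hsum gsum
  rw [range_succ_sum]
  simp only [Nat.cast_zero, zero_pow (Nat.succ_ne_zero a), mul_zero, zero_add,
    Nat.add_sub_cancel, Finset.mul_sum]
  apply Finset.sum_congr rfl
  intro i hi
  simp only [Finset.mem_Icc] at hi
  obtain ⟨i', rfl⟩ : ∃ i', i = i' + 1 := ⟨i - 1, by omega⟩
  have key : (m + 1) * Nat.choose m i' = Nat.choose (m + 1) (i' + 1) * (i' + 1) :=
    Nat.add_one_mul_choose_eq m i'
  have keyZ : ((m : ℤ) + 1) * (Nat.choose m i' : ℤ)
      = (Nat.choose (m + 1) (i' + 1) : ℤ) * ((i' : ℤ) + 1) := by exact_mod_cast key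
  simp only [Nat.add_sub_cancel]
  push_cast
  calc (-1:ℤ) ^ (m - i') * ((m+1).choose (i'+1)) * ((i':ℤ) + 1) ^ (a + 1)
      = ((-1:ℤ) ^ (m - i') * (((m+1).choose (i'+1) : ℤ) * ((i':ℤ)+1))) * ((i':ℤ) + 1) ^ a := by
        ring
    _ = ((m:ℤ) + 1) * ((-1) ^ (m - i') * (m.choose i') * ((i':ℤ) + 1) ^ a) := by
        rw [← keyZ]; ring

lemma gsum_eq (m a : ℕ) : gsum (m + 1) a = hsum (m + 1) a + hsum m a := by
  unfold gsum hsum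
  have pas : ∀ i ∈ Finset.Icc 1 (m + 1),
      (-1 : ℤ) ^ (m + 1 - i) * ((m + 1 - 1).choose (i - 1)) * (i : ℤ) ^ a
      = (-1) ^ (m + 1 - i) * ((m + 1).choose i) * (i : ℤ) ^ a
        - (-1) ^ (m + 1 - i) * (m.choose i) * (i : ℤ) ^ a := by
    intro i hi
    simp only [Finset.mem_Icc] at hi
    obtain ⟨i', rfl⟩ : ∃ i', i = i' + 1 := ⟨i - 1, by omega⟩
    have : (m + 1).choose (i' + 1) = m.choose i' + m.choose (i' + 1) := Nat.choose_succ_succ m i'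
    rw [Nat.add_sub_cancel, this]
    push_cast
    ring
  rw [Finset.sum_congr rfl pas, Finset.sum_sub_distrib]
  rw [range_succ_sum (m + 1) (fun i => (-1 : ℤ) ^ (m + 1 - i) * ((m + 1).choose i) * (i : ℤ) ^ a)]
  -- second sum : over Icc 1 (m+1); last term i = m+1 has choose m (m+1) = 0
  have h2 : ∑ i ∈ Finset.Icc 1 (m + 1), (-1 : ℤ) ^ (m + 1 - i) * (m.choose i) * (i : ℤ) ^ a
      = - ∑ i ∈ Finset.Icc 1 m, (-1 : ℤ) ^ (m - i) * (m.choose i) * (i : ℤ) ^ a := by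
    rw [← Finset.Ico_add_one_right_eq_Icc, Finset.sum_Ico_succ_top (by omega), Finset.Ico_add_one_right_eq_Icc]
    rw [Nat.choose_succ_self]
    simp only [Nat.cast_zero, mul_zero, zero_mul, add_zero]
    rw [← Finset.sum_neg_distrib]
    apply Finset.sum_congr rfl
    intro i hi
    simp only [Finset.mem_Icc] at hi
    have : m + 1 - i = (m - i) + 1 := by omega
    rw [this, pow_succ]
    ring
  rw [h2]
  rw [range_succ_sum m (fun i => (-1 : ℤ) ^ (m - i) * (m.choose i) * (i : ℤ) ^ a)]
  rcases Nat.eq_zero_or_pos a with rfl | ha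
  · simp only [pow_zero, Nat.cast_zero, mul_one, Nat.choose_zero_right, Nat.cast_one,
      Nat.sub_zero, pow_succ]
    ring
  · simp only [Nat.cast_zero, zero_pow (by omega : a ≠ 0), mul_zero, zero_add]
    ring

lemma hval : ∀ (a m : ℕ), hsum m a = (m ! * stirling a m : ℤ)
  | 0, m => by
      rw [hsum_zero_eq]
      rcases m with _ | m
      · simp [stirling]
      · simp [stirling, stirling_eq_zero_of_lt (Nat.succ_pos m)]
  | a + 1, 0 => by
      unfold hsum
      simp [stirling_zero_right (a + 1) (Nat.succ_ne_zero a), zero_pow (Nat.succ_ne_zero a)]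
  | a + 1, m + 1 => by
      rw [hsum_step, gsum_eq, hval a (m + 1), hval a m]
      show ((m : ℤ) + 1) * ((m + 1)! * stirling a (m + 1) + m ! * stirling a m)
          = ((m + 1)! * stirling (a + 1) (m + 1) : ℤ)
      rw [show stirling (a + 1) (m + 1) = (m + 1) * stirling a (m + 1) + stirling a m from rfl]
      rw [Nat.factorial_succ]
      push_cast
      ring

lemma gval (m a : ℕ) : gsum m a = (((m - 1)! * stirling (a + 1) m : ℕ) : ℤ) := by
  rcases m with _ | m
  · unfold gsum
    simp [stirling_zero_right (a + 1) (Nat.succ_ne_zero a)]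
  · rw [gsum_eq, hval a (m + 1), hval a m]
    rw [show stirling (a + 1) (m + 1) = (m + 1) * stirling a (m + 1) + stirling a m from rfl]
    simp only [Nat.add_sub_cancel, Nat.factorial_succ]
    push_cast
    ring

lemma Aser_eq (a : ℕ) :
    (PowerSeries.mk fun m => (((m - 1)! * stirling (a + 1) m : ℕ) : ℤ))
      = ∑ m ∈ Finset.Icc 1 (a + 1), (((m - 1)! * stirling (a + 1) m : ℤ)) •
          (X : PowerSeries ℤ) ^ m := by
  ext n
  rw [coeff_mk, map_sum]
  simp only [LinearMap.map_smul_of_tower, PowerSeries.coeff_X_pow, smul_eq_mul, mul_ite, mul_one, mul_zero]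
  rw [Finset.sum_ite_eq]
  by_cases hn : n ∈ Finset.Icc 1 (a + 1)
  · rw [if_pos hn]
    push_cast
    ring
  · rw [if_neg hn]
    simp only [Finset.mem_Icc, not_and_or, not_le] at hn
    rcases hn with hn | hn
    · have : n = 0 := by omega
      subst this
      simp [stirling_zero_right (a + 1) (Nat.succ_ne_zero a)]
    · rw [stirling_eq_zero_of_lt hn]
      simp

lemma inv_one_add_X :
    PowerSeries.invOfUnit (1 + X : PowerSeries ℤ) 1 = PowerSeries.mk fun d => (-1 : ℤ) ^ d := by
  have hne : (1 + X : PowerSeries ℤ) ≠ 0 := by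
    intro hh
    have := congrArg (PowerSeries.coeff 0) hh
    simp at this
  have h1 : (1 + X : PowerSeries ℤ) * PowerSeries.invOfUnit (1 + X) 1 = 1 :=
    PowerSeries.mul_invOfUnit _ _ (by simp)
  have h2 : (1 + X : PowerSeries ℤ) * PowerSeries.mk (fun d => (-1 : ℤ) ^ d) = 1 := by
    ext n
    rw [add_mul, one_mul]
    rcases n with _ | n
    · simp
    · simp only [map_add, PowerSeries.coeff_succ_X_mul, coeff_mk, PowerSeries.coeff_one]
      simp [pow_succ]
  exact mul_left_cancel₀ hne (h1.trans h2.symm)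


/-- B_d(a_1,…,a_r): the finite sum ∑_{i_1,…,i_r ≥ 1} (-1)^(d-∑ i_j) C(d, ∑ i_j) ∏ i_j^(a_j).
Terms with some i_j > d have ∑ i_j > d, hence vanishing binomial coefficient, so
restricting each index to 1 ≤ i_j ≤ d loses nothing. -/
def Bnum (r d : ℕ) (a : Fin r → ℕ) : ℤ :=
  ∑ i ∈ Fintype.piFinset (fun _ : Fin r => Finset.Icc 1 d),
    (-1 : ℤ) ^ (d - ∑ j, i j) * (d.choose (∑ j, i j)) * ∏ j, (i j : ℤ) ^ (a j)

lemma sum_piFinset_cons {M : Type*} [AddCommMonoid M] (n d : ℕ) (f : (Fin (n + 1) → ℕ) → M) :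
    ∑ i ∈ Fintype.piFinset (fun _ : Fin (n + 1) => Finset.Icc 1 d), f i
      = ∑ x ∈ Finset.Icc 1 d, ∑ t ∈ Fintype.piFinset (fun _ : Fin n => Finset.Icc 1 d),
          f (Fin.cons x t) := by
  rw [← Finset.sum_product']
  apply Finset.sum_nbij' (fun i => ((i 0, Fin.tail i) : ℕ × (Fin n → ℕ)))
    (fun p => Fin.cons p.1 p.2)
  · intro i hi
    simp only [Fintype.mem_piFinset] at hi
    simp only [Finset.mem_product, Fintype.mem_piFinset]
    exact ⟨hi 0, fun j => hi j.succ⟩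
  · intro p hp
    simp only [Finset.mem_product, Fintype.mem_piFinset] at hp
    rw [Fintype.mem_piFinset]
    intro j
    induction j using Fin.cases with
    | zero => simpa using hp.1
    | succ j' => simpa using hp.2 j'
  · intro i _
    exact Fin.cons_self_tail i
  · intro p _
    simp
  · intro i _
    rw [Fin.cons_self_tail i]

lemma Bnum_ext (r e D : ℕ) (he : e ≤ D) (a : Fin r → ℕ) :
    Bnum r e a = ∑ i ∈ Fintype.piFinset (fun _ : Fin r => Finset.Icc 1 D),
      (-1 : ℤ) ^ (e - ∑ j, i j) * (e.choose (∑ j, i j)) * ∏ j, (i j : ℤ) ^ (a j) := by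
  unfold Bnum
  apply Finset.sum_subset
  · exact Fintype.piFinset_subset _ _ fun j => Finset.Icc_subset_Icc_right he
  · intro i hi hni
    have hex : ∃ j, e < i j := by
      by_contra hcon
      push_neg at hcon
      apply hni
      rw [Fintype.mem_piFinset] at hi ⊢
      intro j
      have h1 := hi j
      simp only [Finset.mem_Icc] at h1 ⊢
      exact ⟨h1.1, hcon j⟩
    obtain ⟨j, hj⟩ := hex
    have hsum : e < ∑ j', i j' :=
      lt_of_lt_of_le hj (Finset.single_le_sum (f := fun j => i j)
        (fun _ _ => Nat.zero_le _) (Finset.mem_univ j))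
    rw [Nat.choose_eq_zero_of_lt hsum]
    simp

lemma gsum_ext (m D a : ℕ) (hm : 1 ≤ m) (hD : m ≤ D) :
    gsum m a = ∑ i ∈ Finset.Icc 1 D,
      (-1 : ℤ) ^ (m - i) * ((m - 1).choose (i - 1)) * (i : ℤ) ^ a := by
  unfold gsum
  apply Finset.sum_subset
  · exact Finset.Icc_subset_Icc_right hD
  · intro i hi hni
    simp only [Finset.mem_Icc] at hi hni
    have : m - 1 < i - 1 := by omega
    rw [Nat.choose_eq_zero_of_lt this]
    simp

lemma Kid (d i0 s : ℕ) (hi0 : 1 ≤ i0) :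
    ∑ k ∈ Finset.range d, ((-1 : ℤ) ^ (k + 1 - i0) * (k.choose (i0 - 1)))
        * ((-1 : ℤ) ^ ((d - (k + 1)) - s) * (((d - (k + 1)).choose s : ℕ) : ℤ))
      = (-1 : ℤ) ^ (d - (i0 + s)) * (d.choose (i0 + s)) := by
  rcases Nat.lt_or_ge d (i0 + s) with hd | hd
  · rw [Nat.choose_eq_zero_of_lt hd]
    rw [Nat.cast_zero, mul_zero]
    apply Finset.sum_eq_zero
    intro k hk
    simp only [Finset.mem_range] at hk
    rcases Nat.lt_or_ge k (i0 - 1) with h | h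
    · rw [Nat.choose_eq_zero_of_lt h]; simp
    · have h2 : d - (k + 1) < s := by omega
      rw [Nat.choose_eq_zero_of_lt h2]; simp
  · have hd1 : 1 ≤ d := by omega
    have htrans : ∀ k ∈ Finset.range d,
        ((-1 : ℤ) ^ (k + 1 - i0) * (k.choose (i0 - 1)))
          * ((-1 : ℤ) ^ ((d - (k + 1)) - s) * (((d - (k + 1)).choose s : ℕ) : ℤ))
        = (-1 : ℤ) ^ (d - (i0 + s)) * ((k.choose (i0 - 1) * ((d - 1 - k).choose s) : ℕ) : ℤ) := by
      intro k hk
      simp only [Finset.mem_range] at hk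
      have hdk : d - (k + 1) = d - 1 - k := by omega
      rw [hdk]
      rcases Nat.lt_or_ge k (i0 - 1) with h | h
      · rw [Nat.choose_eq_zero_of_lt h]; simp
      · rcases Nat.lt_or_ge (d - 1 - k) s with h2 | h2
        · rw [Nat.choose_eq_zero_of_lt h2]; simp
        · have e1 : (k + 1 - i0) + ((d - 1 - k) - s) = d - (i0 + s) := by omega
          rw [← e1, pow_add]
          push_cast
          ring
    rw [Finset.sum_congr rfl htrans, ← Finset.mul_sum]
    congr 1
    have hcc := choose_conv (d - 1) (i0 - 1) s
    rw [show d - 1 + 1 = d from by omega] at hcc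
    rw [show i0 - 1 + s + 1 = i0 + s from by omega] at hcc
    rw [← hcc]
    push_cast
    rfl

lemma keyStep (r : ℕ) (a : Fin (r + 1) → ℕ) :
    (PowerSeries.mk fun d => Bnum (r + 1) d a)
      = (PowerSeries.mk fun m => (((m - 1)! * stirling (a 0 + 1) m : ℕ) : ℤ))
        * (PowerSeries.mk fun d => Bnum r d (fun j => a j.succ)) := by
  ext d
  rw [coeff_mk, PowerSeries.coeff_mul, Finset.Nat.sum_antidiagonal_eq_sum_range_succ_mk]
  simp only [coeff_mk]
  rw [Finset.sum_range_succ']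
  rw [show (((0 - 1)! * stirling (a 0 + 1) 0 : ℕ) : ℤ) * Bnum r (d - 0) (fun j => a j.succ) = 0
    from by simp [stirling_zero_right _ (Nat.succ_ne_zero (a 0))], add_zero]
  have hterm : ∀ k ∈ Finset.range d,
      (((k + 1 - 1)! * stirling (a 0 + 1) (k + 1) : ℕ) : ℤ)
          * Bnum r (d - (k + 1)) (fun j => a j.succ)
        = ∑ i0 ∈ Finset.Icc 1 d, ∑ t ∈ Fintype.piFinset (fun _ : Fin r => Finset.Icc 1 d),
            ((-1 : ℤ) ^ (k + 1 - i0) * (((k + 1 - 1).choose (i0 - 1) : ℕ) : ℤ) * (i0 : ℤ) ^ (a 0))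
            * ((-1 : ℤ) ^ ((d - (k + 1)) - ∑ j, t j) * (((d - (k + 1)).choose (∑ j, t j) : ℕ) : ℤ)
               * ∏ j, (t j : ℤ) ^ (a j.succ)) := by
    intro k hk
    simp only [Finset.mem_range] at hk
    rw [← gval (k + 1) (a 0), gsum_ext (k + 1) d (a 0) (by omega) (by omega),
      Bnum_ext r (d - (k + 1)) d (by omega) (fun j => a j.succ), Finset.sum_mul_sum]
  rw [Finset.sum_congr rfl hterm, Finset.sum_comm]
  have hcomm2 : ∀ i0 ∈ Finset.Icc 1 d,
      (∑ k ∈ Finset.range d, ∑ t ∈ Fintype.piFinset (fun _ : Fin r => Finset.Icc 1 d),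
        ((-1 : ℤ) ^ (k + 1 - i0) * (((k + 1 - 1).choose (i0 - 1) : ℕ) : ℤ) * (i0 : ℤ) ^ (a 0))
        * ((-1 : ℤ) ^ ((d - (k + 1)) - ∑ j, t j) * (((d - (k + 1)).choose (∑ j, t j) : ℕ) : ℤ)
           * ∏ j, (t j : ℤ) ^ (a j.succ)))
      = ∑ t ∈ Fintype.piFinset (fun _ : Fin r => Finset.Icc 1 d), ∑ k ∈ Finset.range d,
        ((-1 : ℤ) ^ (k + 1 - i0) * (((k + 1 - 1).choose (i0 - 1) : ℕ) : ℤ) * (i0 : ℤ) ^ (a 0))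
        * ((-1 : ℤ) ^ ((d - (k + 1)) - ∑ j, t j) * (((d - (k + 1)).choose (∑ j, t j) : ℕ) : ℤ)
           * ∏ j, (t j : ℤ) ^ (a j.succ)) :=
    fun i0 _ => Finset.sum_comm
  rw [Finset.sum_congr rfl hcomm2]
  unfold Bnum
  rw [sum_piFinset_cons r d (fun i => (-1 : ℤ) ^ (d - ∑ j, i j) * (d.choose (∑ j, i j))
    * ∏ j, (i j : ℤ) ^ (a j))]
  apply Finset.sum_congr rfl
  intro i0 hi0
  apply Finset.sum_congr rfl
  intro t _
  have hs : (∑ j, (Fin.cons i0 t : Fin (r + 1) → ℕ) j) = i0 + ∑ j, t j := by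
    rw [Fin.sum_univ_succ]
    simp
  have hp : (∏ j, ((Fin.cons i0 t : Fin (r + 1) → ℕ) j : ℤ) ^ a j)
      = (i0 : ℤ) ^ (a 0) * ∏ j : Fin r, (t j : ℤ) ^ (a j.succ) := by
    rw [Fin.prod_univ_succ]
    simp
  rw [hs, hp]
  simp only [Finset.mem_Icc] at hi0
  have hkid := Kid d i0 (∑ j, t j) hi0.1
  calc (-1 : ℤ) ^ (d - (i0 + ∑ j, t j)) * (d.choose (i0 + ∑ j, t j))
          * ((i0 : ℤ) ^ (a 0) * ∏ j, (t j : ℤ) ^ (a j.succ))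
      = ((-1 : ℤ) ^ (d - (i0 + ∑ j, t j)) * (d.choose (i0 + ∑ j, t j)))
          * ((i0 : ℤ) ^ (a 0) * ∏ j, (t j : ℤ) ^ (a j.succ)) := by ring
    _ = (∑ k ∈ Finset.range d, ((-1 : ℤ) ^ (k + 1 - i0) * (k.choose (i0 - 1)))
          * ((-1 : ℤ) ^ ((d - (k + 1)) - ∑ j, t j) * (((d - (k + 1)).choose (∑ j, t j) : ℕ) : ℤ)))
          * ((i0 : ℤ) ^ (a 0) * ∏ j, (t j : ℤ) ^ (a j.succ)) := by rw [hkid]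
    _ = ∑ k ∈ Finset.range d,
        ((-1 : ℤ) ^ (k + 1 - i0) * (((k + 1 - 1).choose (i0 - 1) : ℕ) : ℤ) * (i0 : ℤ) ^ (a 0))
        * ((-1 : ℤ) ^ ((d - (k + 1)) - ∑ j, t j) * (((d - (k + 1)).choose (∑ j, t j) : ℕ) : ℤ)
           * ∏ j, (t j : ℤ) ^ (a j.succ)) := by
        rw [Finset.sum_mul]
        apply Finset.sum_congr rfl
        intro k _
        simp only [Nat.add_sub_cancel]
        ring

/-- ∑_{d≥0} B_d(a_1,…,a_r) u^d = (1/(1+u)) ∏_j P_{a_j+1}(u) in ℤ⟦u⟧,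
where 1/(1+u) is the formal inverse of 1+u (invOfUnit with unit constant term 1). -/
theorem stmt_10 (r : ℕ) (a : Fin r → ℕ) :
    (PowerSeries.mk fun d => (Bnum r d a : ℤ)) =
      PowerSeries.invOfUnit (1 + X) 1 * ∏ j : Fin r, ∑ m ∈ Finset.Icc 1 (a j + 1),
        (((m - 1)! * stirling (a j + 1) m : ℤ)) • (X : PowerSeries ℤ) ^ m := by
  induction r with
  | zero =>
      rw [Finset.univ_eq_empty, Finset.prod_empty, mul_one, inv_one_add_X]
      ext d
      rw [coeff_mk, coeff_mk]
      simp [Bnum]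
  | succ r ih =>
      rw [keyStep r a, ih (fun j => a j.succ), Aser_eq (a 0),
        Fin.prod_univ_succ (fun j => ∑ m ∈ Finset.Icc 1 (a j + 1),
          (((m - 1)! * stirling (a j + 1) m : ℤ)) • (X : PowerSeries ℤ) ^ m)]
      push_cast
      ring
end

section
/- Derivative identity for the P_n polynomials: in the ring of formal Laurent series ℚ((x)), d/dx [ (n-1)! / (log(1+x))^n ] = -n! / ((1+x) (log(1+x))^(n+1)), and consequently the coefficient of x^(-m-1) in n!/((1+x)(log(1+x))^(n+1)) equals m * (m-1)! * S(n,m) = m! * S(n,m) for every m ≥ 1, n ≥ 1. -/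
open Nat

/-- The formal power series log(1+x) = ∑_{k≥1} (-1)^(k-1) x^k / k over ℚ. -/
noncomputable def logOnePlus : PowerSeries ℚ :=
  PowerSeries.mk fun k => if k = 0 then 0 else (-1 : ℚ) ^ (k - 1) / k

/-- log(1+x) viewed as a formal Laurent series in ℚ⸨x⸩. -/
noncomputable def logL : LaurentSeries ℚ := (logOnePlus : LaurentSeries ℚ)

/-- x as a Laurent series. -/
noncomputable def xL : LaurentSeries ℚ := ((PowerSeries.X : PowerSeries ℚ) : LaurentSeries ℚ)

/-!
Write `log(1+x) = x·u` with `u(0) = 1`. Then `(n-1)!/log(1+x)^n = (n-1)! x^(-n) u^(-n)`, and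
differentiating `x^(-n) f` gives `x^(-n-1) (x f' - n f)`; for `f = u^(-n)` one gets
`x f' - n f = -n u^(-n-1) (x u)' = -n u^(-n-1)/(1+x)`, which is the derivative identity.
Multiplying `n!/((1+x) log(1+x)^(n+1))` back by `1+x` gives `n!/log(1+x)^(n+1)`, so the
coefficients `a(n,m)` of `x^(-m)` in `(n-1)!/log(1+x)^n` satisfy
`a(n+1,m) = (m-1) a(n,m-1) + m a(n,m)`: the Stirling recurrence for `(m-1)! S(n,m)`.
-/

open PowerSeries HahnSeries

theorem Derivation.mul_map_pow_sub_nsmul_pow_of_mul_eq_one {R A : Type*} [CommRing R]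
    [CommRing A] [Algebra R A] (D : Derivation R A A) {x u v : A} (hx : D x = 1)
    (hvu : v * u = 1) (n : ℕ) :
    x * D (v ^ n) - n • v ^ n = -(n • (v ^ (n + 1) * D (x * u))) := by
  have hv : D v = -v ^ 2 * D u := by simpa using D.leibniz_of_mul_eq_one hvu
  rw [D.leibniz_pow, D.leibniz, hx, hv]
  simp only [smul_eq_mul, nsmul_eq_mul]
  rcases n with _ | n
  · simp
  · simp only [Nat.add_sub_cancel]
    push_cast
    linear_combination ((n : A) + 1) * v ^ (n + 1) * hvu

theorem LaurentSeries.coeff_derivative {R : Type*} [CommRing R] (f : LaurentSeries R) (k : ℤ) :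
    (LaurentSeries.derivative R f).coeff k = (k + 1 : ℤ) * f.coeff (k + 1) := by
  rw [LaurentSeries.derivative_apply, LaurentSeries.hasseDeriv_coeff, Nat.cast_one,
    Ring.choose_one_right, zsmul_eq_mul]

theorem LaurentSeries.derivative_single_mul_coe {R : Type*} [CommRing R] (m : ℕ) (c : R)
    (f : PowerSeries R) :
    LaurentSeries.derivative R (single (-(m : ℤ)) c * (f : LaurentSeries R)) =
      single (-(m : ℤ) - 1) c *
        ((X * d⁄dX R f - m • f : PowerSeries R) : LaurentSeries R) := by
  ext k
  rw [LaurentSeries.coeff_derivative, coeff_single_mul, coeff_single_mul, PowerSeries.coeff_coe,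
    PowerSeries.coeff_coe, show k + 1 - -(m : ℤ) = k - (-(m : ℤ) - 1) by ring]
  rcases lt_or_ge (k - (-(m : ℤ) - 1)) 0 with h | h
  · simp [h]
  · obtain ⟨j, hj⟩ := Int.eq_ofNat_of_zero_le h
    have hk : k = j - m - 1 := by omega
    rw [hj, if_neg (by omega), if_neg (by omega), Int.natAbs_natCast, map_sub, map_nsmul,
      nsmul_eq_mul]
    rcases j with _ | j
    · simp [hk]
      ring
    · rw [coeff_succ_X_mul, PowerSeries.coeff_derivative, hk]
      push_cast
      ring

theorem LaurentSeries.inv_single_mul_coe {K : Type*} [Field K] {a b : PowerSeries K}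
    (hab : a * b = 1) (m : ℤ) :
    (single m (1 : K) * (a : LaurentSeries K))⁻¹ = single (-m) 1 * (b : LaurentSeries K) := by
  apply inv_eq_of_mul_eq_one_right
  rw [mul_mul_mul_comm, single_mul_single, ← PowerSeries.coe_mul, hab, add_neg_cancel, mul_one,
    PowerSeries.coe_one, mul_one, single_zero_one]

noncomputable def logOnePlusDivX : PowerSeries ℚ :=
  PowerSeries.mk fun k => (-1 : ℚ) ^ k / (k + 1)

theorem X_mul_logOnePlusDivX : X * logOnePlusDivX = logOnePlus := by
  ext (_ | k)
  · simp [logOnePlus]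
  · simp [logOnePlus, logOnePlusDivX, coeff_succ_X_mul]

theorem constantCoeff_logOnePlusDivX : constantCoeff logOnePlusDivX = 1 := by
  simp [logOnePlusDivX, ← coeff_zero_eq_constantCoeff_apply]

theorem one_add_X_mul_derivative_logOnePlus : (1 + X) * d⁄dX ℚ logOnePlus = 1 := by
  ext (_ | k)
  · simp only [add_mul, one_mul, map_add, coeff_zero_X_mul, add_zero, coeff_derivative]
    simp [logOnePlus]
  · simp [logOnePlus, add_mul, coeff_derivative, coeff_succ_X_mul, pow_succ]
    field_simp
    ring

noncomputable def invLogPow (n : ℕ) : LaurentSeries ℚ :=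
  ((n - 1)! : LaurentSeries ℚ) * (logL ^ n)⁻¹

noncomputable def invOneAddMulLogPow (n : ℕ) : LaurentSeries ℚ :=
  (n ! : LaurentSeries ℚ) * ((1 + xL) * logL ^ (n + 1))⁻¹

theorem logL_eq : logL = single 1 1 * (logOnePlusDivX : LaurentSeries ℚ) := by
  rw [logL, ← X_mul_logOnePlusDivX, PowerSeries.coe_mul, PowerSeries.coe_X]

theorem logOnePlusDivX_mul_inv : logOnePlusDivX * logOnePlusDivX⁻¹ = 1 :=
  PowerSeries.mul_inv_cancel _ (by simp [constantCoeff_logOnePlusDivX])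

theorem invLogPow_eq (n : ℕ) :
    invLogPow n =
      single (-(n : ℤ)) ((n - 1)! : ℚ) * ((logOnePlusDivX⁻¹ ^ n : ℚ⟦X⟧) : LaurentSeries ℚ) := by
  have hpow :
      logL ^ n = single (n : ℤ) 1 * ((logOnePlusDivX ^ n : ℚ⟦X⟧) : LaurentSeries ℚ) := by
    rw [logL_eq, mul_pow, single_pow, one_pow, PowerSeries.coe_pow, nsmul_eq_mul, mul_one]
  rw [invLogPow, hpow, LaurentSeries.inv_single_mul_coe (b := logOnePlusDivX⁻¹ ^ n)
    (by rw [← mul_pow, logOnePlusDivX_mul_inv, one_pow]), ← single_zero_natCast, ← mul_assoc,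
    single_mul_single, zero_add, mul_one]

theorem invOneAddMulLogPow_eq (n : ℕ) :
    invOneAddMulLogPow n = single (-(n : ℤ) - 1) (n ! : ℚ) *
      ((logOnePlusDivX⁻¹ ^ (n + 1) * d⁄dX ℚ logOnePlus : ℚ⟦X⟧) : LaurentSeries ℚ) := by
  have hprod : (1 + xL) * logL ^ (n + 1) = single ((n : ℤ) + 1) 1 *
      (((1 + X) * logOnePlusDivX ^ (n + 1) : ℚ⟦X⟧) : LaurentSeries ℚ) := by
    rw [logL_eq, xL, mul_pow, single_pow, one_pow, PowerSeries.coe_mul, PowerSeries.coe_pow,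
      PowerSeries.coe_add, PowerSeries.coe_one, nsmul_eq_mul, mul_one]
    push_cast
    ring
  have hinv : (1 + X) * logOnePlusDivX ^ (n + 1) *
      (logOnePlusDivX⁻¹ ^ (n + 1) * d⁄dX ℚ logOnePlus) = 1 := by
    calc
      _ = (1 + X) * d⁄dX ℚ logOnePlus * (logOnePlusDivX * logOnePlusDivX⁻¹) ^ (n + 1) := by
          ring
      _ = 1 := by
          rw [one_add_X_mul_derivative_logOnePlus, logOnePlusDivX_mul_inv, one_pow, one_mul]
  rw [invOneAddMulLogPow, hprod, LaurentSeries.inv_single_mul_coe hinv, ← single_zero_natCast,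
    ← mul_assoc, single_mul_single, zero_add, mul_one, neg_add']

theorem derivative_invLogPow {n : ℕ} (hn : 1 ≤ n) :
    LaurentSeries.derivative ℚ (invLogPow n) = -invOneAddMulLogPow n := by
  have hlog : X * d⁄dX ℚ (logOnePlusDivX⁻¹ ^ n) - n • logOnePlusDivX⁻¹ ^ n =
      -(n • (logOnePlusDivX⁻¹ ^ (n + 1) * d⁄dX ℚ logOnePlus)) := by
    rw [← X_mul_logOnePlusDivX]
    exact (d⁄dX ℚ).mul_map_pow_sub_nsmul_pow_of_mul_eq_one derivative_X
      (by rw [mul_comm, logOnePlusDivX_mul_inv]) n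
  have hfac : (n ! : ℚ) = n * (n - 1)! := by
    exact_mod_cast (Nat.mul_factorial_pred (by omega)).symm
  ext k
  rw [invLogPow_eq, LaurentSeries.derivative_single_mul_coe, hlog, invOneAddMulLogPow_eq,
    HahnSeries.coeff_neg, coeff_single_mul, coeff_single_mul, PowerSeries.coeff_coe,
    PowerSeries.coeff_coe, map_neg, map_nsmul, nsmul_eq_mul, hfac]
  split_ifs <;> ring

theorem coeff_invOneAddMulLogPow {n : ℕ} (hn : 1 ≤ n) (k : ℤ) :
    (invOneAddMulLogPow n).coeff k = -((k + 1 : ℤ) * (invLogPow n).coeff (k + 1)) := by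
  rw [← LaurentSeries.coeff_derivative, derivative_invLogPow hn, HahnSeries.coeff_neg, neg_neg]

theorem one_add_xL_ne_zero : 1 + xL ≠ 0 := by
  intro h
  simpa [xL, PowerSeries.coe_X] using congrArg (HahnSeries.coeff · 0) h

theorem invLogPow_succ (n : ℕ) : invLogPow (n + 1) = (1 + xL) * invOneAddMulLogPow n := by
  rw [invLogPow, invOneAddMulLogPow, mul_inv, mul_left_comm, ← mul_assoc (1 + xL),
    mul_inv_cancel₀ one_add_xL_ne_zero, one_mul, Nat.add_sub_cancel]

theorem coeff_one_add_xL_mul (F : LaurentSeries ℚ) (k : ℤ) :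
    ((1 + xL) * F).coeff k = F.coeff k + F.coeff (k - 1) := by
  rw [add_mul, one_mul, HahnSeries.coeff_add, xL, PowerSeries.coe_X, coeff_single_mul, one_mul]

theorem coeff_invLogPow_succ {n : ℕ} (hn : 1 ≤ n) (k : ℤ) :
    (invLogPow (n + 1)).coeff k =
      -((k + 1 : ℤ) * (invLogPow n).coeff (k + 1)) - (k : ℤ) * (invLogPow n).coeff k := by
  rw [invLogPow_succ, coeff_one_add_xL_mul, coeff_invOneAddMulLogPow hn,
    coeff_invOneAddMulLogPow hn, sub_add_cancel]
  push_cast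
  ring

theorem coeff_invLogPow_one_neg {m : ℕ} (hm : 1 ≤ m) :
    (invLogPow 1).coeff (-(m : ℤ)) = (m - 1)! * stirling 1 m := by
  rw [invLogPow_eq, coeff_single_mul, PowerSeries.coeff_coe]
  obtain rfl | ⟨q, rfl⟩ : m = 1 ∨ ∃ q, m = q + 2 := by
    rcases m with _ | _ | q <;> simp_all
  · simp [stirling, constantCoeff_logOnePlusDivX]
  · rw [if_pos (by omega)]
    simp [stirling]

theorem coeff_invLogPow_neg {n : ℕ} (hn : 1 ≤ n) {m : ℕ} (hm : 1 ≤ m) :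
    (invLogPow n).coeff (-(m : ℤ)) = (m - 1)! * stirling n m := by
  induction n, hn using Nat.le_induction generalizing m with
  | base => exact coeff_invLogPow_one_neg hm
  | succ n hn ih =>
    rw [coeff_invLogPow_succ hn, show -(m : ℤ) + 1 = -((m - 1 : ℕ) : ℤ) by omega, ih hm]
    obtain rfl | ⟨q, rfl⟩ : m = 1 ∨ ∃ q, m = q + 2 := by
      rcases m with _ | _ | q <;> simp_all
    · obtain ⟨p, rfl⟩ : ∃ p, n = p + 1 := ⟨n - 1, by omega⟩
      simp [stirling]
    · rw [show q + 2 - 1 = q + 1 by omega, ih (by omega)]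
      simp only [stirling, Nat.factorial_succ]
      push_cast
      ring

/-- differentiating the Laurent series (n-1)!/(log(1+x))^n gives
-n!/((1+x)(log(1+x))^(n+1)); stated coefficientwise, for every k the coefficient of
x^k of the derivative, namely (k+1)·(coefficient of x^(k+1)), matches; consequently
the coefficient of x^(-(m+1)) in n!/((1+x)(log(1+x))^(n+1)) equals m! S(n,m)
for all m ≥ 1. -/
theorem stmt_15 (n : ℕ) (hn : 1 ≤ n) :
    (∀ k : ℤ,
      ((k + 1 : ℤ) : ℚ) * (((n - 1)! : LaurentSeries ℚ) * (logL ^ n)⁻¹).coeff (k + 1) =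
        (-((n ! : LaurentSeries ℚ) * ((1 + xL) * logL ^ (n + 1))⁻¹)).coeff k) ∧
    (∀ m : ℕ, 1 ≤ m →
      ((n ! : LaurentSeries ℚ) * ((1 + xL) * logL ^ (n + 1))⁻¹).coeff (-(m : ℤ) - 1) =
        (m ! * stirling n m : ℚ)) := by
  refine ⟨fun k => ?_, fun m hm => ?_⟩
  · rw [← LaurentSeries.coeff_derivative]
    exact congrArg (HahnSeries.coeff · k) (derivative_invLogPow hn)
  · have hfac : (m ! : ℚ) = m * (m - 1)! := by
      exact_mod_cast (Nat.mul_factorial_pred (by omega)).symm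
    change (invOneAddMulLogPow n).coeff _ = _
    rw [coeff_invOneAddMulLogPow hn, sub_add_cancel, coeff_invLogPow_neg hn hm, hfac]
    push_cast
    ring
end
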